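/- In the two-point ambiguity model, let 0 < 𝐩 < 1 and let 𝐪 satisfy 1/𝐩 + 1/𝐪 = 1 (so 𝐪 < 0). Define h(x) := ((1 − x^𝐪 p^{1−𝐪}) / (1−p)^{1−𝐪})^{1/𝐪} for x > q₁ᵇ, where q₁ᵇ := p^{1/𝐩}. Then inf { G(q₁, q₂) : q₁, q₂ > 0 and (q₁/p)^𝐪 p + (q₂/(1−p))^𝐪 (1−p) ≤ 1 } = inf { G(q₁, h(q₁)) : q₁ > q₁ᵇ }, and there exists q₁* > q₁ᵇ such that (q₁*, h(q₁*)) attains the infimum on the left-hand side; in particular, at the optimum the constraint holds with equality. -/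

import Mathlib

open MeasureTheory Real

set_option linter.unusedSectionVars false

/-- Density of the `N(0, T·I_d)` distribution on `ℝ^d`. -/
noncomputable def gaussDensity (d : ℕ) (T : ℝ) (z : Fin d → ℝ) : ℝ :=
  (2 * π * T) ^ (-(d : ℝ) / 2) * Real.exp (-(∑ i, z i ^ 2) / (2 * T))

/-- Likelihood factor `L_T(ϑ, z) = exp(⟨z, ϑ⟩ - ½‖ϑ‖²T)`. -/
noncomputable def likelihood (d : ℕ) (T : ℝ) (ϑ z : Fin d → ℝ) : ℝ :=
  Real.exp ((∑ i, z i * ϑ i) - (∑ i, ϑ i ^ 2) * T / 2)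

/-- `G(q₁, q₂) = ∫ (q₁ L_T(ϑ̄, z) + q₂ L_T(ϑ̲, z))^γ φ_T(z) dz`. -/
noncomputable def Gfun (d : ℕ) (T γ : ℝ) (ϑb ϑl : Fin d → ℝ) (q₁ q₂ : ℝ) : ℝ :=
  ∫ z : Fin d → ℝ,
    (q₁ * likelihood d T ϑb z + q₂ * likelihood d T ϑl z) ^ γ * gaussDensity d T z

/-- `h(x) = ((1 - x^Q p^{1-Q}) / (1-p)^{1-Q})^{1/Q}`, solving the dual constraint
`(x/p)^Q p + (h(x)/(1-p))^Q (1-p) = 1` for the second coordinate. -/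
noncomputable def hAdj (p Q x : ℝ) : ℝ :=
  ((1 - x ^ Q * p ^ (1 - Q)) / (1 - p) ^ (1 - Q)) ^ (1 / Q)

/-! ### Integrability lemmas -/

lemma integrable_exp_lin_sq (a b : ℝ) (hb : 0 < b) :
    Integrable (fun x : ℝ => Real.exp (a * x - b * x ^ 2)) := by
  have h : ∀ x : ℝ, a * x - b * x ^ 2 = a ^ 2 / (4 * b) + -b * (x - a / (2 * b)) ^ 2 := by
    intro x; field_simp; ring
  simp_rw [h, Real.exp_add]
  have h2 : Integrable (fun x : ℝ => Real.exp (-b * x ^ 2)) := integrable_exp_neg_mul_sq hb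
  exact (h2.comp_sub_right (a / (2 * b))).const_mul _

lemma integrable_exp_gauss (d : ℕ) (T : ℝ) (hT : 0 < T) (a : Fin d → ℝ) (c : ℝ) :
    Integrable (fun z : Fin d → ℝ => Real.exp ((∑ i, a i * z i) + c) * gaussDensity d T z) := by
  have key : ∀ z : Fin d → ℝ,
      Real.exp ((∑ i, a i * z i) + c) * gaussDensity d T z
        = (Real.exp c * (2 * π * T) ^ (-(d : ℝ) / 2)) *
          ∏ i, Real.exp (a i * z i - (1 / (2 * T)) * z i ^ 2) := by
    intro z
    rw [gaussDensity, ← Real.exp_sum]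
    rw [Real.exp_add]
    rw [show (∑ i, (a i * z i - (1 / (2 * T)) * z i ^ 2))
        = (∑ i, a i * z i) + (-(∑ i, z i ^ 2) / (2 * T)) by
      rw [Finset.sum_sub_distrib]
      rw [← Finset.mul_sum]; field_simp; ring]
    rw [Real.exp_add]
    ring
  simp_rw [key]
  exact (Integrable.fintype_prod (f := fun i x => Real.exp (a i * x - (1 / (2 * T)) * x ^ 2))
    (fun i => integrable_exp_lin_sq (a i) _ (by positivity))).const_mul _

lemma lik_nonneg (d : ℕ) (T : ℝ) (ϑ z : Fin d → ℝ) : 0 ≤ likelihood d T ϑ z :=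
  (Real.exp_pos _).le

lemma gauss_pos (d : ℕ) {T : ℝ} (hT : 0 < T) (z : Fin d → ℝ) : 0 < gaussDensity d T z := by
  have := Real.pi_pos; unfold gaussDensity; positivity

lemma lik_rpow (d : ℕ) (T γ : ℝ) (ϑ z : Fin d → ℝ) :
    likelihood d T ϑ z ^ γ
      = Real.exp ((∑ i, (γ * ϑ i) * z i) + -((∑ i, ϑ i ^ 2) * T / 2 * γ)) := by
  rw [likelihood, ← Real.exp_mul]
  congr 1
  rw [sub_mul, Finset.sum_mul, sub_eq_add_neg]
  congr 1
  exact Finset.sum_congr rfl fun i _ => by ring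

lemma integrable_lik_pow (d : ℕ) (T : ℝ) (hT : 0 < T) (γ : ℝ) (ϑ : Fin d → ℝ) :
    Integrable (fun z : Fin d → ℝ => likelihood d T ϑ z ^ γ * gaussDensity d T z) := by
  simp_rw [lik_rpow]
  exact integrable_exp_gauss d T hT _ _

lemma continuous_lik (d : ℕ) (T : ℝ) (ϑ : Fin d → ℝ) : Continuous (likelihood d T ϑ) := by
  unfold likelihood; fun_prop

lemma continuous_gauss (d : ℕ) (T : ℝ) : Continuous (gaussDensity d T) := by
  unfold gaussDensity; fun_prop

lemma add_rpow_le {u v γ : ℝ} (hu : 0 ≤ u) (hv : 0 ≤ v) (hγ : 0 ≤ γ) :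
    (u + v) ^ γ ≤ 2 ^ γ * (u ^ γ + v ^ γ) := by
  have h2 : (0:ℝ) ≤ 2 ^ γ := Real.rpow_nonneg (by norm_num) γ
  rcases le_total u v with h | h
  · calc (u + v) ^ γ ≤ (2 * v) ^ γ := Real.rpow_le_rpow (by linarith) (by linarith) hγ
      _ = 2 ^ γ * v ^ γ := Real.mul_rpow (by norm_num) hv
      _ ≤ 2 ^ γ * (u ^ γ + v ^ γ) := by
          have := Real.rpow_nonneg hu γ; nlinarith
  · calc (u + v) ^ γ ≤ (2 * u) ^ γ := Real.rpow_le_rpow (by linarith) (by linarith) hγ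
      _ = 2 ^ γ * u ^ γ := Real.mul_rpow (by norm_num) hu
      _ ≤ 2 ^ γ * (u ^ γ + v ^ γ) := by
          have := Real.rpow_nonneg hv γ; nlinarith

lemma cont_G_integrand (d : ℕ) (T γ : ℝ) (hγ : 0 ≤ γ) (ϑb ϑl : Fin d → ℝ) (q₁ q₂ : ℝ) :
    Continuous (fun z : Fin d → ℝ =>
      (q₁ * likelihood d T ϑb z + q₂ * likelihood d T ϑl z) ^ γ * gaussDensity d T z) := by
  exact ((((continuous_const.mul (continuous_lik d T ϑb)).add
      (continuous_const.mul (continuous_lik d T ϑl))).rpow_const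
      (fun z => Or.inr hγ)).mul (continuous_gauss d T))

lemma meas_G_integrand (d : ℕ) (T γ : ℝ) (hγ : 0 ≤ γ) (ϑb ϑl : Fin d → ℝ) (q₁ q₂ : ℝ) :
    AEStronglyMeasurable (fun z : Fin d → ℝ =>
      (q₁ * likelihood d T ϑb z + q₂ * likelihood d T ϑl z) ^ γ * gaussDensity d T z)
      (volume : Measure (Fin d → ℝ)) :=
  (cont_G_integrand d T γ hγ ϑb ϑl q₁ q₂).aestronglyMeasurable

lemma G_pointwise_bound (d : ℕ) (T : ℝ) (hT : 0 < T) (γ : ℝ) (hγ : 0 < γ)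
    (ϑb ϑl : Fin d → ℝ) {q₁ q₂ D : ℝ} (h₁ : 0 ≤ q₁) (h₂ : 0 ≤ q₂) (hD₁ : q₁ ≤ D) (hD₂ : q₂ ≤ D)
    (z : Fin d → ℝ) :
    ‖(q₁ * likelihood d T ϑb z + q₂ * likelihood d T ϑl z) ^ γ * gaussDensity d T z‖
      ≤ 2 ^ γ * (D ^ γ * (likelihood d T ϑb z ^ γ * gaussDensity d T z)
          + D ^ γ * (likelihood d T ϑl z ^ γ * gaussDensity d T z)) := by
  have hLb' : 0 ≤ likelihood d T ϑb z := lik_nonneg d T ϑb z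
  have hLl' : 0 ≤ likelihood d T ϑl z := lik_nonneg d T ϑl z
  have hφ : 0 ≤ gaussDensity d T z := (gauss_pos d hT z).le
  rw [Real.norm_of_nonneg (by positivity)]
  have step1 : (q₁ * likelihood d T ϑb z + q₂ * likelihood d T ϑl z) ^ γ
      ≤ 2 ^ γ * ((q₁ * likelihood d T ϑb z) ^ γ + (q₂ * likelihood d T ϑl z) ^ γ) :=
    add_rpow_le (by positivity) (by positivity) hγ.le
  have step2 : (q₁ * likelihood d T ϑb z) ^ γ ≤ D ^ γ * likelihood d T ϑb z ^ γ := by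
    rw [Real.mul_rpow h₁ hLb']
    exact mul_le_mul_of_nonneg_right (Real.rpow_le_rpow h₁ hD₁ hγ.le) (Real.rpow_nonneg hLb' γ)
  have step3 : (q₂ * likelihood d T ϑl z) ^ γ ≤ D ^ γ * likelihood d T ϑl z ^ γ := by
    rw [Real.mul_rpow h₂ hLl']
    exact mul_le_mul_of_nonneg_right (Real.rpow_le_rpow h₂ hD₂ hγ.le) (Real.rpow_nonneg hLl' γ)
  have h2γ : (0:ℝ) ≤ 2 ^ γ := Real.rpow_nonneg (by norm_num) γ
  calc (q₁ * likelihood d T ϑb z + q₂ * likelihood d T ϑl z) ^ γ * gaussDensity d T z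
      ≤ (2 ^ γ * ((q₁ * likelihood d T ϑb z) ^ γ + (q₂ * likelihood d T ϑl z) ^ γ))
          * gaussDensity d T z := mul_le_mul_of_nonneg_right step1 hφ
    _ ≤ (2 ^ γ * (D ^ γ * likelihood d T ϑb z ^ γ + D ^ γ * likelihood d T ϑl z ^ γ))
          * gaussDensity d T z := by
        apply mul_le_mul_of_nonneg_right _ hφ
        apply mul_le_mul_of_nonneg_left _ h2γ
        exact add_le_add step2 step3
    _ = 2 ^ γ * (D ^ γ * (likelihood d T ϑb z ^ γ * gaussDensity d T z)
          + D ^ γ * (likelihood d T ϑl z ^ γ * gaussDensity d T z)) := by ring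

lemma integrable_G_integrand (d : ℕ) (T : ℝ) (hT : 0 < T) (γ : ℝ) (hγ : 0 < γ)
    (ϑb ϑl : Fin d → ℝ) {q₁ q₂ D : ℝ} (h₁ : 0 ≤ q₁) (h₂ : 0 ≤ q₂) (hD₁ : q₁ ≤ D) (hD₂ : q₂ ≤ D) :
    Integrable (fun z : Fin d → ℝ =>
      (q₁ * likelihood d T ϑb z + q₂ * likelihood d T ϑl z) ^ γ * gaussDensity d T z) := by
  have hbd : Integrable (fun z : Fin d → ℝ =>
      2 ^ γ * (D ^ γ * (likelihood d T ϑb z ^ γ * gaussDensity d T z)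
        + D ^ γ * (likelihood d T ϑl z ^ γ * gaussDensity d T z))) :=
    ((((integrable_lik_pow d T hT γ ϑb).const_mul _).add
      ((integrable_lik_pow d T hT γ ϑl).const_mul _)).const_mul _)
  exact hbd.mono' (meas_G_integrand d T γ hγ.le ϑb ϑl q₁ q₂)
    (Filter.Eventually.of_forall fun z =>
      G_pointwise_bound d T hT γ hγ ϑb ϑl h₁ h₂ hD₁ hD₂ z)

/-! ### Gfun lemmas -/

section G
variable (d : ℕ) (T : ℝ) (hT : 0 < T) (γ : ℝ) (hγ : 0 < γ) (ϑb ϑl : Fin d → ℝ)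
include hT hγ

lemma Gfun_nonneg (q₁ q₂ : ℝ) (h₁ : 0 ≤ q₁) (h₂ : 0 ≤ q₂) : 0 ≤ Gfun d T γ ϑb ϑl q₁ q₂ := by
  apply integral_nonneg
  intro z
  simp only [Pi.zero_apply]
  have := lik_nonneg d T ϑb z; have := lik_nonneg d T ϑl z; have := (gauss_pos d hT z).le
  positivity

lemma Gfun_mono₂ {q₁ q₂ q₂' : ℝ} (h₁ : 0 ≤ q₁) (h₂ : 0 ≤ q₂) (h : q₂ ≤ q₂') :
    Gfun d T γ ϑb ϑl q₁ q₂ ≤ Gfun d T γ ϑb ϑl q₁ q₂' := by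
  apply integral_mono
    (integrable_G_integrand d T hT γ hγ ϑb ϑl h₁ h₂ (le_max_left _ _) (le_max_right _ _))
    (integrable_G_integrand d T hT γ hγ ϑb ϑl h₁ (h₂.trans h) (le_max_left _ _) (le_max_right _ _))
  intro z
  dsimp only
  have hφ := (gauss_pos d hT z).le
  apply mul_le_mul_of_nonneg_right _ hφ
  apply Real.rpow_le_rpow
  · have := lik_nonneg d T ϑb z; have := lik_nonneg d T ϑl z; positivity
  · exact add_le_add le_rfl (mul_le_mul_of_nonneg_right h (lik_nonneg d T ϑl z))
  · exact hγ.le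

noncomputable def Cb : ℝ := ∫ z : Fin d → ℝ, likelihood d T ϑb z ^ γ * gaussDensity d T z

lemma Cb_pos : 0 < Cb d T γ ϑb := by
  rw [Cb, integral_pos_iff_support_of_nonneg]
  · have : Function.support (fun z : Fin d → ℝ =>
        likelihood d T ϑb z ^ γ * gaussDensity d T z) = Set.univ := by
      ext z
      simp only [Function.mem_support, Set.mem_univ, iff_true]
      have h2 := gauss_pos d hT z
      have h3 : 0 < likelihood d T ϑb z := Real.exp_pos _
      positivity
    rw [this]
    exact (isOpen_univ).measure_pos volume ⟨0, trivial⟩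
  · intro z
    have := lik_nonneg d T ϑb z; have := (gauss_pos d hT z).le; positivity
  · exact integrable_lik_pow d T hT γ ϑb

lemma Gfun_lower₁ {q₁ q₂ : ℝ} (h₁ : 0 ≤ q₁) (h₂ : 0 ≤ q₂) :
    q₁ ^ γ * Cb d T γ ϑb ≤ Gfun d T γ ϑb ϑl q₁ q₂ := by
  have : q₁ ^ γ * Cb d T γ ϑb
      = ∫ z : Fin d → ℝ, q₁ ^ γ * (likelihood d T ϑb z ^ γ * gaussDensity d T z) := by
    rw [Cb, integral_const_mul]
  rw [this]
  apply integral_mono ((integrable_lik_pow d T hT γ ϑb).const_mul _)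
    (integrable_G_integrand d T hT γ hγ ϑb ϑl h₁ h₂ (le_max_left _ _) (le_max_right _ _))
  intro z
  dsimp only
  have hφ := (gauss_pos d hT z).le
  have hLb := lik_nonneg d T ϑb z
  have hLl := lik_nonneg d T ϑl z
  calc q₁ ^ γ * (likelihood d T ϑb z ^ γ * gaussDensity d T z)
      = (q₁ * likelihood d T ϑb z) ^ γ * gaussDensity d T z := by
        rw [Real.mul_rpow h₁ hLb]; ring
    _ ≤ (q₁ * likelihood d T ϑb z + q₂ * likelihood d T ϑl z) ^ γ * gaussDensity d T z := by
        apply mul_le_mul_of_nonneg_right _ hφ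
        apply Real.rpow_le_rpow (by positivity) (by nlinarith) hγ.le

lemma Gfun_lower₂ {q₁ q₂ : ℝ} (h₁ : 0 ≤ q₁) (h₂ : 0 ≤ q₂) :
    q₂ ^ γ * Cb d T γ ϑl ≤ Gfun d T γ ϑb ϑl q₁ q₂ := by
  have : q₂ ^ γ * Cb d T γ ϑl
      = ∫ z : Fin d → ℝ, q₂ ^ γ * (likelihood d T ϑl z ^ γ * gaussDensity d T z) := by
    rw [Cb, integral_const_mul]
  rw [this]
  apply integral_mono ((integrable_lik_pow d T hT γ ϑl).const_mul _)
    (integrable_G_integrand d T hT γ hγ ϑb ϑl h₁ h₂ (le_max_left _ _) (le_max_right _ _))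
  intro z
  dsimp only
  have hφ := (gauss_pos d hT z).le
  have hLb := lik_nonneg d T ϑb z
  have hLl := lik_nonneg d T ϑl z
  calc q₂ ^ γ * (likelihood d T ϑl z ^ γ * gaussDensity d T z)
      = (q₂ * likelihood d T ϑl z) ^ γ * gaussDensity d T z := by
        rw [Real.mul_rpow h₂ hLl]; ring
    _ ≤ (q₁ * likelihood d T ϑb z + q₂ * likelihood d T ϑl z) ^ γ * gaussDensity d T z := by
        apply mul_le_mul_of_nonneg_right _ hφ
        apply Real.rpow_le_rpow (by positivity) (by nlinarith) hγ.le

lemma Gfun_continuousAt {x y : ℝ} (hx : 0 < x) (hy : 0 < y) :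
    ContinuousAt (fun u : ℝ × ℝ => Gfun d T γ ϑb ϑl u.1 u.2) (x, y) := by
  set D : ℝ := x + y + 1 with hD
  have hnb : Set.Ioo (0:ℝ) D ×ˢ Set.Ioo (0:ℝ) D ∈ nhds ((x, y) : ℝ × ℝ) := by
    apply (isOpen_Ioo.prod isOpen_Ioo).mem_nhds
    constructor <;> constructor <;> simp [hD] <;> linarith
  apply continuousAt_of_dominated
    (bound := fun z => 2 ^ γ * (D ^ γ * (likelihood d T ϑb z ^ γ * gaussDensity d T z)
          + D ^ γ * (likelihood d T ϑl z ^ γ * gaussDensity d T z)))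
  · exact Filter.Eventually.of_forall fun u => meas_G_integrand d T γ hγ.le ϑb ϑl u.1 u.2
  · refine Filter.eventually_of_mem hnb fun u hu => Filter.Eventually.of_forall fun z => ?_
    obtain ⟨⟨hu1, hu1'⟩, hu2, hu2'⟩ := hu
    exact G_pointwise_bound d T hT γ hγ ϑb ϑl hu1.le hu2.le hu1'.le hu2'.le z
  · exact (((integrable_lik_pow d T hT γ ϑb).const_mul _).add
      ((integrable_lik_pow d T hT γ ϑl).const_mul _)).const_mul _
  · refine Filter.Eventually.of_forall fun z => ?_
    exact ((((continuous_fst.mul continuous_const).add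
      (continuous_snd.mul continuous_const)).rpow_const
      (fun _ => Or.inr hγ.le)).mul continuous_const).continuousAt

end G

/-! ### Algebraic lemmas for the constraint -/

section alg
variable {p P Q : ℝ} (hp0 : 0 < p) (hp1 : p < 1)
  (hP0 : 0 < P) (hP1 : P < 1) (hPQ : 1 / P + 1 / Q = 1)
include hp0 hp1 hP0 hP1 hPQ

lemma Q_neg : Q < 0 := by
  have h1 : 1 < 1 / P := one_lt_one_div hP0 hP1
  have h2 : 1 / Q < 0 := by linarith
  exact one_div_neg.mp h2

lemma Q_ne : Q ≠ 0 := (Q_neg hp0 hp1 hP0 hP1 hPQ).ne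

lemma base_rpow : (p ^ (1 / P)) ^ Q = (p ^ (1 - Q))⁻¹ := by
  have hQ := Q_ne hp0 hp1 hP0 hP1 hPQ
  have h1 : (1 / P) * Q = Q - 1 := by
    have : 1 / P = 1 - 1 / Q := by linarith
    rw [this]; field_simp
  rw [← Real.rpow_mul hp0.le, h1, show Q - 1 = -(1 - Q) by ring, Real.rpow_neg hp0.le]

lemma term1_eq {q₁ : ℝ} (hq₁ : 0 < q₁) :
    (q₁ / p) ^ Q * p = q₁ ^ Q * p ^ (1 - Q) := by
  rw [Real.div_rpow hq₁.le hp0.le, Real.rpow_sub hp0, Real.rpow_one]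
  ring

lemma term2_eq {q₂ : ℝ} (hq₂ : 0 < q₂) :
    (q₂ / (1 - p)) ^ Q * (1 - p) = q₂ ^ Q * (1 - p) ^ (1 - Q) := by
  have hc : (0:ℝ) < 1 - p := by linarith
  rw [Real.div_rpow hq₂.le hc.le, Real.rpow_sub hc, Real.rpow_one]
  ring

lemma A_pos {x : ℝ} (hx : p ^ (1 / P) < x) : 0 < 1 - x ^ Q * p ^ (1 - Q) := by
  have hQ := Q_neg hp0 hp1 hP0 hP1 hPQ
  have hb : (0:ℝ) < p ^ (1 / P) := Real.rpow_pos_of_pos hp0 _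
  have h1 : x ^ Q < (p ^ (1 / P)) ^ Q :=
    (Real.rpow_lt_rpow_iff_of_neg (hb.trans hx) hb hQ).mpr hx
  rw [base_rpow hp0 hp1 hP0 hP1 hPQ] at h1
  have hp1Q : (0:ℝ) < p ^ (1 - Q) := Real.rpow_pos_of_pos hp0 _
  have h2 := mul_lt_mul_of_pos_right h1 hp1Q
  rw [inv_mul_cancel₀ hp1Q.ne'] at h2
  linarith

lemma A_mono {x y : ℝ} (hx : 0 < x) (hxy : x ≤ y) :
    1 - x ^ Q * p ^ (1 - Q) ≤ 1 - y ^ Q * p ^ (1 - Q) := by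
  have hQ := Q_neg hp0 hp1 hP0 hP1 hPQ
  have h : y ^ Q ≤ x ^ Q := (Real.rpow_le_rpow_iff_of_neg (hx.trans_le hxy) hx hQ).mpr hxy
  have hp1Q : (0:ℝ) ≤ p ^ (1 - Q) := (Real.rpow_pos_of_pos hp0 _).le
  nlinarith

lemma hAdj_pos {x : ℝ} (hx : p ^ (1 / P) < x) : 0 < hAdj p Q x := by
  have hA := A_pos hp0 hp1 hP0 hP1 hPQ hx
  have hc : (0:ℝ) < (1 - p) ^ (1 - Q) := Real.rpow_pos_of_pos (by linarith) _
  exact Real.rpow_pos_of_pos (by positivity) _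

lemma hAdj_rpow {x : ℝ} (hx : p ^ (1 / P) < x) :
    hAdj p Q x ^ Q = (1 - x ^ Q * p ^ (1 - Q)) / (1 - p) ^ (1 - Q) := by
  have hA := A_pos hp0 hp1 hP0 hP1 hPQ hx
  have hc : (0:ℝ) < (1 - p) ^ (1 - Q) := Real.rpow_pos_of_pos (by linarith) _
  have hQ := Q_ne hp0 hp1 hP0 hP1 hPQ
  rw [hAdj, ← Real.rpow_mul (by positivity), one_div, inv_mul_cancel₀ hQ, Real.rpow_one]

lemma boundary_eq {x : ℝ} (hx : p ^ (1 / P) < x) :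
    (x / p) ^ Q * p + (hAdj p Q x / (1 - p)) ^ Q * (1 - p) = 1 := by
  have hb : (0:ℝ) < p ^ (1 / P) := Real.rpow_pos_of_pos hp0 _
  have hx0 : 0 < x := hb.trans hx
  have hc : (0:ℝ) < (1 - p) ^ (1 - Q) := Real.rpow_pos_of_pos (by linarith) _
  rw [term1_eq hp0 hp1 hP0 hP1 hPQ hx0,
    term2_eq hp0 hp1 hP0 hP1 hPQ (hAdj_pos hp0 hp1 hP0 hP1 hPQ hx),
    hAdj_rpow hp0 hp1 hP0 hP1 hPQ hx]
  field_simp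
  ring

lemma feas_iff {q₁ q₂ : ℝ} (hq₁ : p ^ (1 / P) < q₁) (hq₂ : 0 < q₂) :
    (q₁ / p) ^ Q * p + (q₂ / (1 - p)) ^ Q * (1 - p) ≤ 1 ↔ hAdj p Q q₁ ≤ q₂ := by
  have hb : (0:ℝ) < p ^ (1 / P) := Real.rpow_pos_of_pos hp0 _
  have hx0 : 0 < q₁ := hb.trans hq₁
  have hQ := Q_neg hp0 hp1 hP0 hP1 hPQ
  have hc : (0:ℝ) < (1 - p) ^ (1 - Q) := Real.rpow_pos_of_pos (by linarith) _
  have hh := hAdj_pos hp0 hp1 hP0 hP1 hPQ hq₁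
  rw [term1_eq hp0 hp1 hP0 hP1 hPQ hx0, term2_eq hp0 hp1 hP0 hP1 hPQ hq₂]
  rw [← Real.rpow_le_rpow_iff_of_neg hq₂ hh hQ,
    hAdj_rpow hp0 hp1 hP0 hP1 hPQ hq₁, le_div_iff₀ hc]
  constructor
  · intro h; nlinarith
  · intro h; nlinarith

lemma feas_imp {q₁ q₂ : ℝ} (hq₁ : 0 < q₁) (hq₂ : 0 < q₂)
    (h : (q₁ / p) ^ Q * p + (q₂ / (1 - p)) ^ Q * (1 - p) ≤ 1) : p ^ (1 / P) < q₁ := by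
  have hQ := Q_neg hp0 hp1 hP0 hP1 hPQ
  have hb : (0:ℝ) < p ^ (1 / P) := Real.rpow_pos_of_pos hp0 _
  have hc : (0:ℝ) < 1 - p := by linarith
  have h2 : 0 < (q₂ / (1 - p)) ^ Q * (1 - p) :=
    mul_pos (Real.rpow_pos_of_pos (by positivity) _) hc
  have h1 : (q₁ / p) ^ Q * p < 1 := by linarith
  rw [term1_eq hp0 hp1 hP0 hP1 hPQ hq₁] at h1
  have hp1Q : (0:ℝ) < p ^ (1 - Q) := Real.rpow_pos_of_pos hp0 _
  have h3 : q₁ ^ Q < (p ^ (1 - Q))⁻¹ := by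
    rw [inv_eq_one_div, lt_div_iff₀ hp1Q]
    exact h1
  rw [← base_rpow hp0 hp1 hP0 hP1 hPQ] at h3
  exact (Real.rpow_lt_rpow_iff_of_neg hq₁ hb hQ).mp h3

/-- If `A(x) ≤ K^Q (1-p)^{1-Q}` then `K ≤ hAdj x`. -/
lemma hAdj_ge {x K : ℝ} (hx : p ^ (1 / P) < x) (hK : 0 < K)
    (h : 1 - x ^ Q * p ^ (1 - Q) ≤ K ^ Q * (1 - p) ^ (1 - Q)) : K ≤ hAdj p Q x := by
  have hQ := Q_neg hp0 hp1 hP0 hP1 hPQ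
  have hh := hAdj_pos hp0 hp1 hP0 hP1 hPQ hx
  have hc : (0:ℝ) < (1 - p) ^ (1 - Q) := Real.rpow_pos_of_pos (by linarith) _
  have h1 : hAdj p Q x ^ Q ≤ K ^ Q := by
    rw [hAdj_rpow hp0 hp1 hP0 hP1 hPQ hx, div_le_iff₀ hc]
    exact h
  exact (Real.rpow_le_rpow_iff_of_neg hh hK hQ).mp h1

lemma hAdj_continuousAt {x : ℝ} (hx : p ^ (1 / P) < x) :
    ContinuousAt (hAdj p Q) x := by
  have hb : (0:ℝ) < p ^ (1 / P) := Real.rpow_pos_of_pos hp0 _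
  have hx0 : 0 < x := hb.trans hx
  have hA := A_pos hp0 hp1 hP0 hP1 hPQ hx
  have hc : (0:ℝ) < (1 - p) ^ (1 - Q) := Real.rpow_pos_of_pos (by linarith) _
  have c1 : ContinuousAt (fun t : ℝ => (1 - t ^ Q * p ^ (1 - Q)) / (1 - p) ^ (1 - Q)) x :=
    (continuousAt_const.sub ((Real.continuousAt_rpow_const x Q
      (Or.inl hx0.ne')).mul continuousAt_const)).div_const _
  have c2 := c1.rpow_const (p := 1 / Q) (Or.inl (by positivity))
  exact c2

end alg

/-- Adjusted-prior optimization in the ambiguity-averse case `0 < P = λ/α < 1` (conjugate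
`Q < 0`): the infimum of `G` over the feasible set `{q₁, q₂ > 0, (q₁/p)^Q p + (q₂/(1-p))^Q (1-p) ≤ 1}`
equals the infimum of `q₁ ↦ G(q₁, h(q₁))` over `q₁ > p^{1/P}`, and there is `q₁* > p^{1/P}`
such that `(q₁*, h(q₁*))` attains the infimum, the constraint holding there with equality. -/
theorem stmt_17 (d : ℕ) (hd : 1 ≤ d) (T : ℝ) (hT : 0 < T) (γ : ℝ) (hγ : 0 < γ)
    (ϑb ϑl : Fin d → ℝ) (p : ℝ) (hp0 : 0 < p) (hp1 : p < 1)
    (P Q : ℝ) (hP0 : 0 < P) (hP1 : P < 1) (hPQ : 1 / P + 1 / Q = 1) :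
    sInf {r : ℝ | ∃ q₁ q₂ : ℝ, 0 < q₁ ∧ 0 < q₂ ∧
          (q₁ / p) ^ Q * p + (q₂ / (1 - p)) ^ Q * (1 - p) ≤ 1 ∧
          r = Gfun d T γ ϑb ϑl q₁ q₂}
      = sInf {r : ℝ | ∃ q₁ : ℝ, p ^ (1 / P) < q₁ ∧
          r = Gfun d T γ ϑb ϑl q₁ (hAdj p Q q₁)} ∧
    ∃ q₁star : ℝ, p ^ (1 / P) < q₁star ∧
      IsLeast {r : ℝ | ∃ q₁ q₂ : ℝ, 0 < q₁ ∧ 0 < q₂ ∧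
          (q₁ / p) ^ Q * p + (q₂ / (1 - p)) ^ Q * (1 - p) ≤ 1 ∧
          r = Gfun d T γ ϑb ϑl q₁ q₂}
        (Gfun d T γ ϑb ϑl q₁star (hAdj p Q q₁star)) ∧
      (q₁star / p) ^ Q * p + (hAdj p Q q₁star / (1 - p)) ^ Q * (1 - p) = 1 := by
  have hQ : Q < 0 := Q_neg hp0 hp1 hP0 hP1 hPQ
  set qb : ℝ := p ^ (1 / P) with hqb_def
  have hqb0 : 0 < qb := Real.rpow_pos_of_pos hp0 _
  have hqb1 : qb < 1 := Real.rpow_lt_one hp0.le hp1 (by positivity)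
  have hcQ : (0:ℝ) < (1 - p) ^ (1 - Q) := Real.rpow_pos_of_pos (by linarith) _
  -- the curve function
  set g : ℝ → ℝ := fun x => Gfun d T γ ϑb ϑl x (hAdj p Q x) with hg_def
  have gcont : ∀ x : ℝ, qb < x → ContinuousAt g x := by
    intro x hx
    have hx0 : 0 < x := hqb0.trans hx
    have hhx : 0 < hAdj p Q x := hAdj_pos hp0 hp1 hP0 hP1 hPQ hx
    have h1 : ContinuousAt (fun t : ℝ => ((t, hAdj p Q t) : ℝ × ℝ)) x :=
      continuousAt_id.prodMk (hAdj_continuousAt hp0 hp1 hP0 hP1 hPQ hx)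
    have h2 : ContinuousAt (fun u : ℝ × ℝ => Gfun d T γ ϑb ϑl u.1 u.2)
        ((x, hAdj p Q x) : ℝ × ℝ) := Gfun_continuousAt d T hT γ hγ ϑb ϑl hx0 hhx
    show ContinuousAt ((fun u : ℝ × ℝ => Gfun d T γ ϑb ϑl u.1 u.2) ∘
      (fun t : ℝ => ((t, hAdj p Q t) : ℝ × ℝ))) x
    exact ContinuousAt.comp (x := x) h2 h1
  -- coercivity constants
  set Cb' : ℝ := Cb d T γ ϑb with hCb_def
  set Cl' : ℝ := Cb d T γ ϑl with hCl_def
  have hCb0 : 0 < Cb' := Cb_pos d T hT γ hγ ϑb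
  have hCl0 : 0 < Cl' := Cb_pos d T hT γ hγ ϑl
  have h1qb : qb < 1 := hqb1
  have hone : 0 < hAdj p Q 1 := hAdj_pos hp0 hp1 hP0 hP1 hPQ h1qb
  set r₀ : ℝ := g 1 with hr₀_def
  have hr₀ : 0 ≤ r₀ := Gfun_nonneg d T hT γ hγ ϑb ϑl 1 _ (by norm_num) hone.le
  -- high-q₁ coercivity
  set Kb : ℝ := max 1 (((r₀ + 1) / Cb') ^ (1 / γ)) with hKb_def
  have hKb_big : ∀ x q₂ : ℝ, Kb ≤ x → 0 ≤ q₂ → r₀ < Gfun d T γ ϑb ϑl x q₂ := by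
    intro x q₂ hx hq₂
    have hx0 : (0:ℝ) < x := lt_of_lt_of_le one_pos (le_trans (le_max_left _ _) hx)
    have h1 : ((r₀ + 1) / Cb') ^ (1 / γ) ≤ x := le_trans (le_max_right _ _) hx
    have h2 : (((r₀ + 1) / Cb') ^ (1 / γ)) ^ γ ≤ x ^ γ :=
      Real.rpow_le_rpow (Real.rpow_nonneg (by positivity) _) h1 hγ.le
    rw [one_div, Real.rpow_inv_rpow (by positivity) hγ.ne'] at h2
    have h3 : r₀ + 1 ≤ x ^ γ * Cb' := by
      rw [div_le_iff₀ hCb0] at h2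
      linarith
    have h4 := Gfun_lower₁ d T hT γ hγ ϑb ϑl hx0.le hq₂
    rw [← hCb_def] at h4
    linarith
  -- low-q₁ coercivity
  set Kl : ℝ := max 1 (((r₀ + 1) / Cl') ^ (1 / γ)) with hKl_def
  have hKl0 : (0:ℝ) < Kl := lt_of_lt_of_le one_pos (le_max_left _ _)
  have hKl_big : ∀ x : ℝ, qb < x → Kl ≤ hAdj p Q x → r₀ < g x := by
    intro x hx hKx
    have hx0 : 0 < x := hqb0.trans hx
    have hhx : 0 < hAdj p Q x := hAdj_pos hp0 hp1 hP0 hP1 hPQ hx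
    have h1 : ((r₀ + 1) / Cl') ^ (1 / γ) ≤ hAdj p Q x := le_trans (le_max_right _ _) hKx
    have h2 : (((r₀ + 1) / Cl') ^ (1 / γ)) ^ γ ≤ hAdj p Q x ^ γ :=
      Real.rpow_le_rpow (Real.rpow_nonneg (by positivity) _) h1 hγ.le
    rw [one_div, Real.rpow_inv_rpow (by positivity) hγ.ne'] at h2
    have h3 : r₀ + 1 ≤ hAdj p Q x ^ γ * Cl' := by
      rw [div_le_iff₀ hCl0] at h2
      linarith
    have h4 := Gfun_lower₂ d T hT γ hγ ϑb ϑl hx0.le hhx.le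
    rw [← hCl_def] at h4
    linarith
  -- find the left endpoint a
  set δ : ℝ := Kl ^ Q * (1 - p) ^ (1 - Q) with hδ_def
  have hδ0 : 0 < δ := mul_pos (Real.rpow_pos_of_pos hKl0 _) hcQ
  have hAcont : ContinuousAt (fun t : ℝ => 1 - t ^ Q * p ^ (1 - Q)) qb :=
    continuousAt_const.sub ((Real.continuousAt_rpow_const qb Q
      (Or.inl hqb0.ne')).mul continuousAt_const)
  have hAqb : 1 - qb ^ Q * p ^ (1 - Q) = 0 := by
    rw [hqb_def, base_rpow hp0 hp1 hP0 hP1 hPQ,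
      inv_mul_cancel₀ (Real.rpow_pos_of_pos hp0 (1 - Q)).ne']
    ring
  have hev : ∀ᶠ x in nhds qb, 1 - x ^ Q * p ^ (1 - Q) < δ := by
    have := hAcont
    rw [ContinuousAt, hAqb] at this
    exact this.eventually_lt_const hδ0
  have hev' : ∀ᶠ x in nhdsWithin qb (Set.Ioi qb),
      (1 - x ^ Q * p ^ (1 - Q) < δ) ∧ x ∈ Set.Ioi qb :=
    (hev.filter_mono nhdsWithin_le_nhds).and self_mem_nhdsWithin
  obtain ⟨a₀, ha₀δ, ha₀⟩ := hev'.exists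
  set a : ℝ := min a₀ 1 with ha_def
  have haqb : qb < a := lt_min ha₀ hqb1
  have ha1 : a ≤ 1 := min_le_right _ _
  have hsmall : ∀ x : ℝ, qb < x → x ≤ a → Kl ≤ hAdj p Q x := by
    intro x hx hxa
    have hx0 : 0 < x := hqb0.trans hx
    have h1 : 1 - x ^ Q * p ^ (1 - Q) ≤ 1 - a₀ ^ Q * p ^ (1 - Q) :=
      A_mono hp0 hp1 hP0 hP1 hPQ hx0 (hxa.trans (min_le_left _ _))
    exact hAdj_ge hp0 hp1 hP0 hP1 hPQ hx hKl0 (by rw [← hδ_def]; linarith)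
  set b : ℝ := max 1 Kb with hb_def
  have hab : a ≤ b := ha1.trans (le_max_left _ _)
  have h1mem : (1:ℝ) ∈ Set.Icc a b := ⟨ha1, le_max_left _ _⟩
  -- minimize over the compact interval
  have hgcont : ContinuousOn g (Set.Icc a b) := fun x hx =>
    (gcont x (lt_of_lt_of_le haqb hx.1)).continuousWithinAt
  obtain ⟨q₁star, hq₁star_mem, hmin⟩ :=
    isCompact_Icc.exists_isMinOn ⟨1, h1mem⟩ hgcont
  have hq₁star : qb < q₁star := lt_of_lt_of_le haqb hq₁star_mem.1
  have hstar_le_r₀ : g q₁star ≤ r₀ := hmin h1mem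
  -- global minimality on the curve
  have hglob : ∀ x : ℝ, qb < x → g q₁star ≤ g x := by
    intro x hx
    rcases le_or_gt x a with hxa | hxa
    · rcases eq_or_lt_of_le hxa with rfl | hxa'
      · exact hmin ⟨le_refl _, hab⟩
      · exact le_of_lt (lt_of_le_of_lt hstar_le_r₀
          (hKl_big x hx (hsmall x hx hxa'.le)))
    · rcases le_or_gt x b with hxb | hxb
      · exact hmin ⟨hxa.le, hxb⟩
      · have hKbx : Kb ≤ x := le_trans (le_max_right _ _) hxb.le
        have hhx : 0 < hAdj p Q x := hAdj_pos hp0 hp1 hP0 hP1 hPQ hx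
        exact le_of_lt (lt_of_le_of_lt hstar_le_r₀
          (hKb_big x _ hKbx hhx.le))
  -- the two sets
  set S : Set ℝ := {r : ℝ | ∃ q₁ q₂ : ℝ, 0 < q₁ ∧ 0 < q₂ ∧
      (q₁ / p) ^ Q * p + (q₂ / (1 - p)) ^ Q * (1 - p) ≤ 1 ∧
      r = Gfun d T γ ϑb ϑl q₁ q₂} with hS_def
  set S' : Set ℝ := {r : ℝ | ∃ q₁ : ℝ, qb < q₁ ∧
      r = Gfun d T γ ϑb ϑl q₁ (hAdj p Q q₁)} with hS'_def
  have hstar_mem_S : g q₁star ∈ S := by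
    refine ⟨q₁star, hAdj p Q q₁star, hqb0.trans hq₁star,
      hAdj_pos hp0 hp1 hP0 hP1 hPQ hq₁star,
      (boundary_eq hp0 hp1 hP0 hP1 hPQ hq₁star).le, rfl⟩
  have hleast_S : IsLeast S (g q₁star) := by
    refine ⟨hstar_mem_S, ?_⟩
    rintro r ⟨q₁, q₂, hq₁, hq₂, hcon, rfl⟩
    have hq₁b : qb < q₁ := feas_imp hp0 hp1 hP0 hP1 hPQ hq₁ hq₂ hcon
    have hfe : hAdj p Q q₁ ≤ q₂ := (feas_iff hp0 hp1 hP0 hP1 hPQ hq₁b hq₂).mp hcon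
    have hmono : g q₁ ≤ Gfun d T γ ϑb ϑl q₁ q₂ :=
      Gfun_mono₂ d T hT γ hγ ϑb ϑl hq₁.le
        (hAdj_pos hp0 hp1 hP0 hP1 hPQ hq₁b).le hfe
    exact le_trans (hglob q₁ hq₁b) hmono
  have hleast_S' : IsLeast S' (g q₁star) := by
    refine ⟨⟨q₁star, hq₁star, rfl⟩, ?_⟩
    rintro r ⟨q₁, hq₁, rfl⟩
    exact hglob q₁ hq₁
  refine ⟨?_, q₁star, hq₁star, hleast_S, boundary_eq hp0 hp1 hP0 hP1 hPQ hq₁star⟩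
  rw [hleast_S.csInf_eq, hleast_S'.csInf_eq]
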